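/- arXiv:1812.02329 — 6 statements merged into one kernel-verified Lean document; each statement's English description precedes it below -/
import Mathlib

section
/- For monotone f : [0,1] → [0,1], the identities (f∨)∧ = f∧ and (f∧)∨ = f∨ hold, where f∨(x) = ⨆_{y<x} f(y) and f∧(x) = ⨅_{x<y} f(y). Consequently, f ↦ f∧ and g ↦ g∨ are mutually inverse order isomorphisms between the poset of join-continuous functions [0,1]→[0,1] and the poset of meet-continuous functions [0,1]→[0,1]. -/
open unitInterval

instance : Fact ((0:ℝ) ≤ 1) := ⟨zero_le_one⟩

/-- A self-map of `[0,1]` is join-continuous if it preserves all suprema. -/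
def JoinCont (f : unitInterval → unitInterval) : Prop :=
  ∀ X : Set unitInterval, f (sSup X) = sSup (f '' X)

/-- A self-map of `[0,1]` is meet-continuous if it preserves all infima. -/
def MeetCont (f : unitInterval → unitInterval) : Prop :=
  ∀ X : Set unitInterval, f (sInf X) = sInf (f '' X)

/-- `f∨(x) := ⨆_{y < x} f(y)`. -/
noncomputable def jOf (f : unitInterval → unitInterval) (x : unitInterval) :
    unitInterval := sSup (f '' {y | y < x})

/-- `f∧(x) := ⨅_{x < y} f(y)`. -/
noncomputable def mOf (f : unitInterval → unitInterval) (x : unitInterval) :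
    unitInterval := sInf (f '' {y | x < y})

/-!
For monotone `f`, `f∨ ≤ f ≤ f∧`, and by density every `y > x` has some `z` with `x < z < y`,
so `f∨(y) ≥ f(z) ≥ f∧(x)`; together these give `(f∨)∧ = f∧`, and `(f∧)∨ = f∨` is the same
statement in the order duals. A join-continuous `f` satisfies `f∨ = f`, since `x = ⨆_{y<x} y`,
hence `(f∧)∨ = f` and dually `(g∨)∧ = g` for meet-continuous `g`, while `f∨` is always
join-continuous and `f∧` meet-continuous.
-/

open Set

section

variable {α β : Type*}

def leftSup [Preorder α] [CompleteLattice β] (f : α → β) (x : α) : β :=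
  sSup (f '' Iio x)

/-- `f∧` is `f∨` computed in the order duals, so every lemma about `leftSup` dualizes for free. -/
def rightInf [Preorder α] [CompleteLattice β] (f : α → β) : α → β :=
  leftSup (α := αᵒᵈ) (β := βᵒᵈ) f

theorem leftSup_apply [Preorder α] [CompleteLattice β] (f : α → β) (x : α) :
    leftSup f x = sSup (f '' Iio x) :=
  rfl

theorem rightInf_apply [Preorder α] [CompleteLattice β] (f : α → β) (x : α) :
    rightInf f x = sInf (f '' Ioi x) :=
  rfl

def PreservesSSup [CompleteLattice α] [CompleteLattice β] (f : α → β) : Prop :=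
  ∀ s : Set α, f (sSup s) = sSup (f '' s)

def PreservesSInf [CompleteLattice α] [CompleteLattice β] (f : α → β) : Prop :=
  ∀ s : Set α, f (sInf s) = sInf (f '' s)

theorem PreservesSSup.monotone [CompleteLattice α] [CompleteLattice β] {f : α → β}
    (hf : PreservesSSup f) : Monotone f := by
  intro x y hxy
  have h := hf {x, y}
  rw [image_pair, sSup_pair, sSup_pair, sup_eq_right.2 hxy] at h
  exact h ▸ le_sup_left

section Preorder

variable [Preorder α] [CompleteLattice β]

theorem leftSup_monotone (f : α → β) : Monotone (leftSup f) := fun _ _ hxy =>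
  sSup_le_sSup (image_mono fun _ hz => lt_of_lt_of_le hz hxy)

theorem monotone_leftSup : Monotone (leftSup : (α → β) → α → β) := fun _ _ hfg _ =>
  sSup_le fun _ ⟨y, hy, hfy⟩ => hfy ▸ (hfg y).trans (le_sSup (mem_image_of_mem _ hy))

theorem leftSup_le {f : α → β} (hf : Monotone f) : leftSup f ≤ f := fun _ =>
  sSup_le fun _ ⟨_, hz, hfz⟩ => hfz ▸ hf (le_of_lt hz)

theorem monotone_rightInf : Monotone (rightInf : (α → β) → α → β) := fun f g hfg =>
  monotone_leftSup (α := αᵒᵈ) (β := βᵒᵈ) (a := g) (b := f) hfg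

end Preorder

section Dense

variable [LinearOrder α] [DenselyOrdered α] [CompleteLattice β]

theorem rightInf_leftSup {f : α → β} (hf : Monotone f) :
    rightInf (leftSup f) = rightInf f := by
  funext x
  simp only [rightInf_apply]
  apply le_antisymm
  · exact le_sInf fun _ ⟨y, hxy, hfy⟩ =>
      hfy ▸ (sInf_le (mem_image_of_mem _ hxy)).trans (leftSup_le hf y)
  · refine le_sInf fun _ ⟨y, hxy, hfy⟩ => hfy ▸ ?_
    obtain ⟨z, hxz, hzy⟩ := exists_between (show x < y from hxy)
    exact (sInf_le (mem_image_of_mem f hxz)).trans (le_sSup (mem_image_of_mem f hzy))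

theorem leftSup_rightInf {f : α → β} (hf : Monotone f) :
    leftSup (rightInf f) = leftSup f :=
  rightInf_leftSup (α := αᵒᵈ) (β := βᵒᵈ) hf.dual

end Dense

section CompleteLinearOrder

variable [CompleteLinearOrder α] [CompleteLattice β]

theorem leftSup_preservesSSup (f : α → β) : PreservesSSup (leftSup f) := by
  intro s
  apply le_antisymm
  · refine sSup_le fun _ ⟨y, hy, hfy⟩ => hfy ▸ ?_
    obtain ⟨x, hxs, hyx⟩ := lt_sSup_iff.1 (show y < sSup s from hy)
    calc f y ≤ leftSup f x := le_sSup (mem_image_of_mem f hyx)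
      _ ≤ sSup (leftSup f '' s) := le_sSup (mem_image_of_mem _ hxs)
  · exact sSup_le fun _ ⟨x, hxs, hfx⟩ => hfx ▸ leftSup_monotone f (le_sSup hxs)

theorem rightInf_preservesSInf (f : α → β) : PreservesSInf (rightInf f) :=
  leftSup_preservesSSup (α := αᵒᵈ) (β := βᵒᵈ) f

variable [DenselyOrdered α]

theorem leftSup_eq_self {f : α → β} (hf : PreservesSSup f) : leftSup f = f := by
  funext x
  rw [leftSup_apply, ← hf, isLUB_Iio.sSup_eq]

theorem leftSup_rightInf_eq_self {f : α → β} (hf : PreservesSSup f) :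
    leftSup (rightInf f) = f :=
  (leftSup_rightInf hf.monotone).trans (leftSup_eq_self hf)

theorem rightInf_leftSup_eq_self {g : α → β} (hg : PreservesSInf g) :
    rightInf (leftSup g) = g :=
  leftSup_rightInf_eq_self (α := αᵒᵈ) (β := βᵒᵈ) hg

theorem rightInf_le_rightInf_iff {f₁ f₂ : α → β} (h₁ : PreservesSSup f₁)
    (h₂ : PreservesSSup f₂) : rightInf f₁ ≤ rightInf f₂ ↔ f₁ ≤ f₂ := by
  refine ⟨fun h => ?_, fun h => monotone_rightInf h⟩
  rw [← leftSup_rightInf_eq_self h₁, ← leftSup_rightInf_eq_self h₂]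
  exact monotone_leftSup h

theorem leftSup_le_leftSup_iff {g₁ g₂ : α → β} (h₁ : PreservesSInf g₁)
    (h₂ : PreservesSInf g₂) : leftSup g₁ ≤ leftSup g₂ ↔ g₁ ≤ g₂ :=
  rightInf_le_rightInf_iff (α := αᵒᵈ) (β := βᵒᵈ) h₂ h₁

end CompleteLinearOrder

end

/-- For monotone `f : [0,1] → [0,1]`, `(f∨)∧ = f∧` and `(f∧)∨ = f∨`.
Consequently, `f ↦ f∧` and `g ↦ g∨` are mutually inverse order isomorphisms
between the (pointwise ordered) posets of join-continuous and of
meet-continuous self-maps of `[0,1]`. -/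
theorem stmt_6 :
    (∀ f : unitInterval → unitInterval, Monotone f →
        mOf (jOf f) = mOf f ∧ jOf (mOf f) = jOf f) ∧
    (∀ f, JoinCont f → MeetCont (mOf f)) ∧
    (∀ g, MeetCont g → JoinCont (jOf g)) ∧
    (∀ f, JoinCont f → jOf (mOf f) = f) ∧
    (∀ g, MeetCont g → mOf (jOf g) = g) ∧
    (∀ f₁ f₂, JoinCont f₁ → JoinCont f₂ → (f₁ ≤ f₂ ↔ mOf f₁ ≤ mOf f₂)) ∧
    (∀ g₁ g₂, MeetCont g₁ → MeetCont g₂ → (g₁ ≤ g₂ ↔ jOf g₁ ≤ jOf g₂)) := by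
  -- On `[0,1]`, `jOf`, `mOf`, `JoinCont`, `MeetCont` are definitionally
  -- `leftSup`, `rightInf`, `PreservesSSup`, `PreservesSInf`.
  exact ⟨fun f hf => ⟨rightInf_leftSup hf, leftSup_rightInf hf⟩,
    fun f _ => rightInf_preservesSInf f, fun g _ => leftSup_preservesSSup g,
    fun f hf => leftSup_rightInf_eq_self hf, fun g hg => rightInf_leftSup_eq_self hg,
    fun f₁ f₂ h₁ h₂ => (rightInf_le_rightInf_iff h₁ h₂).symm,
    fun g₁ g₂ h₁ h₂ => (leftSup_le_leftSup_iff h₁ h₂).symm⟩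
end

section
/- Let f : [0,1] → [0,1] be join-continuous and define f*(x) := ⨆ {y ∈ [0,1] | f(y) < x}. Then f* is join-continuous, the map f ↦ f* is an antitone involution of the lattice of join-continuous self-maps of [0,1], and, with f ⊗ g := g ∘ f and f ⊕ g := (g* ⊗ f*)*, for all join-continuous f, g, h the equivalence f ⊗ g ≤ h ⟺ f ≤ h ⊕ g* holds. -/
open unitInterval

/-- `f*(x) := ⨆ {y | f y < x}`. -/
noncomputable def starOf (f : unitInterval → unitInterval) (x : unitInterval) :
    unitInterval := sSup {y | f y < x}

/-- `f ⊕ g := (g* ⊗ f*)* = (f* ∘ g*)*`, where `f ⊗ g := g ∘ f`. -/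
noncomputable def oplusOf (f g : unitInterval → unitInterval) :
    unitInterval → unitInterval := starOf (starOf f ∘ starOf g)

lemma lt_sSup' {S : Set unitInterval} {a : unitInterval} (h : a < sSup S) :
    ∃ s ∈ S, a < s := by
  by_contra hc
  push_neg at hc
  exact absurd (sSup_le fun s hs => le_of_not_gt fun hl => absurd hl (not_lt.mpr (hc s hs)))
    (not_le.mpr h)

lemma joinCont_mono {f : unitInterval → unitInterval} (hf : JoinCont f) : Monotone f := by
  intro a b hab
  have := hf {a, b}
  rw [sSup_pair, sup_eq_right.mpr hab, Set.image_pair, sSup_pair] at this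
  rw [this]
  exact le_sup_left

lemma le_starOf {f : unitInterval → unitInterval} {a b : unitInterval} (h : f a < b) :
    a ≤ starOf f b := le_sSup h

lemma lt_starOf {f : unitInterval → unitInterval} (hf : Monotone f) {a b : unitInterval}
    (h : a < starOf f b) : f a < b := by
  obtain ⟨s, hs, has⟩ := lt_sSup' h
  exact lt_of_le_of_lt (hf has.le) hs

lemma starOf_lt {f : unitInterval → unitInterval} {a b : unitInterval}
    (h : starOf f b < a) : b ≤ f a := by
  by_contra hc
  exact absurd (le_starOf (not_le.mp hc)) (not_le.mpr h)

lemma starOf_mono (f : unitInterval → unitInterval) : Monotone (starOf f) :=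
  fun a b hab => sSup_le fun y hy => le_sSup (lt_of_lt_of_le hy hab)

lemma starOf_apply_le {f : unitInterval → unitInterval} (hf : Monotone f) (w : unitInterval) :
    starOf f (f w) ≤ w :=
  sSup_le fun z hz => le_of_not_gt fun hl => absurd (hf hl.le) (not_le.mpr hz)

lemma sSup_lt_self (x : unitInterval) : sSup {w : unitInterval | w < x} = x := by
  refine le_antisymm (sSup_le fun w hw => hw.le) ?_
  by_contra hc
  obtain ⟨c, hc1, hc2⟩ := exists_between (not_le.mp hc)
  exact absurd (le_sSup (show c ∈ {w : unitInterval | w < x} from hc2)) (not_le.mpr hc1)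

lemma starOf_joinCont (f : unitInterval → unitInterval) : JoinCont (starOf f) := by
  intro X
  refine le_antisymm (sSup_le fun y hy => ?_) (sSup_le ?_)
  · obtain ⟨u, hu, hyu⟩ := lt_sSup' (hy : f y < sSup X)
    exact le_trans (le_starOf hyu) (le_sSup ⟨u, hu, rfl⟩)
  · rintro _ ⟨x, hx, rfl⟩
    exact starOf_mono f (le_sSup hx)

lemma starOf_starOf {f : unitInterval → unitInterval} (hf : JoinCont f) :
    starOf (starOf f) = f := by
  funext x
  refine le_antisymm (sSup_le fun y hy => starOf_lt hy) ?_
  have : f x = sSup (f '' {w | w < x}) := by rw [← hf, sSup_lt_self]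
  rw [this]
  refine sSup_le ?_
  rintro _ ⟨w, hw, rfl⟩
  exact le_sSup (lt_of_le_of_lt (starOf_apply_le (joinCont_mono hf) w) hw)

/-- `f ↦ f*` is an antitone involution of the lattice of join-continuous
self-maps of `[0,1]`, and `f ⊗ g ≤ h ⟺ f ≤ h ⊕ g*` where `f ⊗ g := g ∘ f`
and `f ⊕ g := (g* ⊗ f*)*`. -/
theorem stmt_8 :
    (∀ f, JoinCont f → JoinCont (starOf f)) ∧
    (∀ f g, JoinCont f → JoinCont g → f ≤ g → starOf g ≤ starOf f) ∧
    (∀ f, JoinCont f → starOf (starOf f) = f) ∧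
    (∀ f g h, JoinCont f → JoinCont g → JoinCont h →
        (g ∘ f ≤ h ↔ f ≤ oplusOf h (starOf g))) := by
  refine ⟨fun f _ => starOf_joinCont f, ?_, fun f hf => starOf_starOf hf, ?_⟩
  · intro f g _ _ hfg x
    exact sSup_le fun y hy => le_sSup (lt_of_le_of_lt (hfg y) hy)
  · intro f g h hf hg hh
    have hkey : oplusOf h (starOf g) = starOf (starOf h ∘ g) := by
      unfold oplusOf
      rw [starOf_starOf hg]
    rw [hkey]
    constructor
    · intro hle x
      have hx : f x = sSup (f '' {w | w < x}) := by rw [← hf, sSup_lt_self]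
      rw [hx]
      refine sSup_le ?_
      rintro _ ⟨w, hw, rfl⟩
      refine le_sSup (Set.mem_setOf.mpr ?_)
      show starOf h (g (f w)) < x
      calc starOf h (g (f w)) ≤ starOf h (h w) := starOf_mono h (hle w)
        _ ≤ w := starOf_apply_le (joinCont_mono hh) w
        _ < x := hw
    · intro hle x
      by_contra hc
      have hlt : h x < g (f x) := not_le.mp hc
      have : g (f x) ≤ g (starOf (starOf h ∘ g) x) := joinCont_mono hg (hle x)
      have hgs : g (starOf (starOf h ∘ g) x) =
          sSup (g '' {y | starOf h (g y) < x}) := hg _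
      rw [hgs] at this
      obtain ⟨_, ⟨y, hy, rfl⟩, hxy⟩ := lt_sSup' (lt_of_lt_of_le hlt this)
      exact absurd (starOf_lt hy) (not_le.mpr hxy)
end

section
/- Every bi-continuous function f : C → [0,1], where C is a maximal chain of [0,1]^d, is surjective. -/
/-!
A maximal chain `C` of the complete, densely ordered lattice `[0,1]^d` is itself a complete,
densely ordered linear order: the supremum or infimum of a subset of `C`, and any point strictly
between two elements of `C` with nothing of `C` in between, is comparable with every element of
`C`, hence lies in `C` by maximality. Given `y`, let `s` be the supremum of `{f ≤ y}` and `t` the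
infimum of `{y ≤ f}`; preservation of suprema and infima gives `f s ≤ y ≤ f t`. If `y` were not
a value of `f`, monotonicity would force `s < t`, and an element of `C` strictly between `s` and
`t` would belong to neither set.
-/

open unitInterval

open Set Function

theorem monotone_of_isLUB_map {α β : Type*} [Preorder α] [Preorder β] {f : α → β}
    (hf : ∀ (X : Set α) (s : α), IsLUB X s → IsLUB (f '' X) (f s)) : Monotone f := by
  intro a b hab
  have hlub : IsLUB {a, b} b :=
    IsGreatest.isLUB ⟨mem_insert_of_mem a rfl, forall_insert_of_forall (fun _ h => h.le) hab⟩
  exact (hf _ _ hlub).1 (mem_image_of_mem f (mem_insert a {b}))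

theorem surjective_of_isLUB_map_of_isGLB_map {α β : Type*} [LinearOrder α] [DenselyOrdered α]
    [LinearOrder β] (hsup : ∀ X : Set α, ∃ s, IsLUB X s) (hinf : ∀ X : Set α, ∃ t, IsGLB X t)
    {f : α → β} (hjoin : ∀ (X : Set α) (s : α), IsLUB X s → IsLUB (f '' X) (f s))
    (hmeet : ∀ (X : Set α) (t : α), IsGLB X t → IsGLB (f '' X) (f t)) :
    Surjective f := by
  intro y
  by_contra! hy
  obtain ⟨s, hs⟩ := hsup {x | f x ≤ y}
  obtain ⟨t, ht⟩ := hinf {x | y ≤ f x}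
  have hfs : f s < y := ((hjoin _ s hs).2 (forall_mem_image.2 fun _ hx => hx)).lt_of_ne (hy s)
  have hft : y < f t := ((hmeet _ t ht).2 (forall_mem_image.2 fun _ hx => hx)).lt_of_ne' (hy t)
  have hst : s < t := lt_of_not_ge fun hts =>
    (hfs.trans hft).not_ge (monotone_of_isLUB_map hjoin hts)
  obtain ⟨m, hsm, hmt⟩ := exists_between hst
  rcases le_total (f m) y with hm | hm
  · exact (hs.1 hm).not_gt hsm
  · exact (ht.1 hm).not_gt hmt

namespace IsMaxChain

variable {α : Type*} {C : Set α}

theorem mem_of_forall_le_or_le [LE α] (hC : IsMaxChain (· ≤ ·) C) {a : α}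
    (ha : ∀ c ∈ C, a ≤ c ∨ c ≤ a) : a ∈ C :=
  (hC.2 (hC.1.insert fun c hc _ => ha c hc) (subset_insert a C)).symm ▸ mem_insert a C

theorem sSup_mem [CompleteLattice α] (hC : IsMaxChain (· ≤ ·) C) {X : Set α} (hX : X ⊆ C) :
    sSup X ∈ C := by
  refine hC.mem_of_forall_le_or_le fun c hc => ?_
  by_cases hXc : ∀ x ∈ X, x ≤ c
  · exact .inl (sSup_le hXc)
  · push Not at hXc
    obtain ⟨x, hx, hxc⟩ := hXc
    exact .inr (((hC.1.total hc (hX hx)).resolve_right hxc).trans (le_sSup hx))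

theorem sInf_mem [CompleteLattice α] (hC : IsMaxChain (· ≤ ·) C) {X : Set α} (hX : X ⊆ C) :
    sInf X ∈ C :=
  sSup_mem (α := αᵒᵈ) hC.symm hX

theorem exists_isLUB [CompleteLattice α] (hC : IsMaxChain (· ≤ ·) C) (X : Set C) :
    ∃ s : C, IsLUB X s :=
  ⟨⟨sSup (Subtype.val '' X), hC.sSup_mem (image_subset_iff.2 fun x _ => x.2)⟩,
    fun _ hx => le_sSup (mem_image_of_mem _ hx),
    fun _ hb => sSup_le (forall_mem_image.2 fun _ hx => hb hx)⟩

theorem exists_isGLB [CompleteLattice α] (hC : IsMaxChain (· ≤ ·) C) (X : Set C) :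
    ∃ t : C, IsGLB X t :=
  ⟨⟨sInf (Subtype.val '' X), hC.sInf_mem (image_subset_iff.2 fun x _ => x.2)⟩,
    fun _ hx => sInf_le (mem_image_of_mem _ hx),
    fun _ hb => le_sInf (forall_mem_image.2 fun _ hx => hb hx)⟩

theorem denselyOrdered [PartialOrder α] [DenselyOrdered α] (hC : IsMaxChain (· ≤ ·) C) :
    DenselyOrdered C := by
  refine ⟨fun s t hst => ?_⟩
  by_contra! hgap
  obtain ⟨m, hsm, hmt⟩ := exists_between (show (s : α) < t from hst)
  have hmC : m ∈ C := hC.mem_of_forall_le_or_le fun c hc => by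
    rcases hC.1.total hc s.2 with hcs | hsc
    · exact .inr (hcs.trans hsm.le)
    rcases hC.1.total hc t.2 with hct | htc
    · rcases hsc.eq_or_lt with rfl | hsc
      · exact .inr hsm.le
      rcases hct.eq_or_lt with rfl | hct
      · exact .inl hmt.le
      exact absurd (show (⟨c, hc⟩ : C) < t from hct) (hgap ⟨c, hc⟩ hsc)
    · exact .inl (hmt.le.trans htc)
  exact hgap ⟨m, hmC⟩ hsm hmt

end IsMaxChain

/-- Every bi-continuous function from a maximal chain of `[0,1]^d` to `[0,1]`
is surjective. Bi-continuity is expressed by preservation of all least upper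
bounds and all greatest lower bounds. -/
theorem stmt_11 (d : ℕ) (C : Set (Fin d → unitInterval))
    (hC : IsMaxChain (· ≤ ·) C) (f : C → unitInterval)
    (hjoin : ∀ (X : Set C) (s : C), IsLUB X s → IsLUB (f '' X) (f s))
    (hmeet : ∀ (X : Set C) (s : C), IsGLB X s → IsGLB (f '' X) (f s)) :
    Function.Surjective f := by
  classical
  let := hC.isChain.linearOrder
  have := hC.denselyOrdered
  exact surjective_of_isLUB_map_of_isGLB_map hC.exists_isLUB hC.exists_isGLB hjoin hmeet
end

section
/- Every maximal chain C of [0,1]^d is order-isomorphic to [0,1]. -/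
open unitInterval

section Aux

variable {d : ℕ} {C : Set (Fin d → unitInterval)}

/-- Sum of coordinates, as a real number. -/
noncomputable def gsum (x : Fin d → unitInterval) : ℝ := ∑ i, (x i : ℝ)

lemma gsum_mono {x y : Fin d → unitInterval} (h : x ≤ y) : gsum x ≤ gsum y :=
  Finset.sum_le_sum fun i _ => h i

lemma gsum_strict {x y : Fin d → unitInterval} (h : x ≤ y) (hne : x ≠ y) :
    gsum x < gsum y := by
  obtain ⟨i, hi⟩ := Function.ne_iff.mp hne
  refine Finset.sum_lt_sum (fun j _ => h j) ⟨i, Finset.mem_univ i, ?_⟩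
  exact lt_of_le_of_ne (h i) (fun hh => hi (Subtype.ext hh))

lemma mem_of_comp (hC : IsMaxChain (· ≤ ·) C) {z : Fin d → unitInterval}
    (h : ∀ y ∈ C, z ≤ y ∨ y ≤ z) : z ∈ C := by
  have := hC.2 (hC.1.insert (fun b hb _ => h b hb)) (Set.subset_insert z C)
  rw [this]; exact Set.mem_insert z C

lemma sSup_mem_chain (hC : IsMaxChain (· ≤ ·) C) {S : Set (Fin d → unitInterval)}
    (hS : S ⊆ C) : sSup S ∈ C := by
  apply mem_of_comp hC
  intro y hy
  by_cases h : ∀ s ∈ S, s ≤ y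
  · exact Or.inl (sSup_le h)
  · push_neg at h
    obtain ⟨s, hsS, hsy⟩ := h
    have hys : y ≤ s := by
      rcases hC.1 (hS hsS) hy (fun he => hsy (he ▸ le_refl _)) with h' | h'
      · exact absurd h' hsy
      · exact h'
    exact Or.inr (hys.trans (le_sSup hsS))

lemma sInf_mem_chain (hC : IsMaxChain (· ≤ ·) C) {S : Set (Fin d → unitInterval)}
    (hS : S ⊆ C) : sInf S ∈ C := by
  apply mem_of_comp hC
  intro y hy
  by_cases h : ∀ s ∈ S, y ≤ s
  · exact Or.inr (le_sInf h)
  · push_neg at h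
    obtain ⟨s, hsS, hsy⟩ := h
    have hys : s ≤ y := by
      rcases hC.1 (hS hsS) hy (fun he => hsy (he ▸ le_refl _)) with h' | h'
      · exact h'
      · exact absurd h' hsy
    exact Or.inl ((sInf_le hsS).trans hys)

lemma no_gap (hC : IsMaxChain (· ≤ ·) C) {a b : Fin d → unitInterval}
    (ha : a ∈ C) (hb : b ∈ C) (hab : a < b)
    (hgap : ∀ y ∈ C, y ≤ a ∨ b ≤ y) : False := by
  have hab' : ∀ i, (a i : ℝ) ≤ (b i : ℝ) := fun i => hab.1 i
  set c : Fin d → unitInterval := fun i => ⟨((a i : ℝ) + (b i : ℝ)) / 2, by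
    constructor
    · have := (a i).2.1; have := (b i).2.1; linarith
    · have := (a i).2.2; have := (b i).2.2; linarith⟩ with hcdef
  have hac : a ≤ c := by
    intro i
    show (a i : ℝ) ≤ ((a i : ℝ) + (b i : ℝ)) / 2
    linarith [hab' i]
  have hcb : c ≤ b := by
    intro i
    show ((a i : ℝ) + (b i : ℝ)) / 2 ≤ (b i : ℝ)
    linarith [hab' i]
  have hcC : c ∈ C := by
    apply mem_of_comp hC
    intro y hy
    rcases hgap y hy with h | h
    · exact Or.inr (h.trans hac)
    · exact Or.inl (hcb.trans h)
  obtain ⟨i, hi⟩ := Function.ne_iff.mp hab.ne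
  have hilt : (a i : ℝ) < (b i : ℝ) :=
    lt_of_le_of_ne (hab' i) (fun hh => hi (Subtype.ext hh))
  rcases hgap c hcC with h | h
  · have := h i
    have : ((a i : ℝ) + (b i : ℝ)) / 2 ≤ (a i : ℝ) := this
    linarith
  · have := h i
    have : (b i : ℝ) ≤ ((a i : ℝ) + (b i : ℝ)) / 2 := this
    linarith

lemma exists_near_sSup (hd : 1 ≤ d) {S : Set (Fin d → unitInterval)}
    (hS : S.Nonempty) (hch : IsChain (· ≤ ·) S) {ε : ℝ} (hε : 0 < ε) :
    ∃ y ∈ S, gsum (sSup S) < gsum y + ε := by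
  have hne : Nonempty S := hS.to_subtype
  have hd0 : (0:ℝ) < d := by exact_mod_cast Nat.lt_of_lt_of_le Nat.zero_lt_one hd
  have key : ∀ i : Fin d, ∃ y : S,
      ((sSup S) i : ℝ) - ε / d < ((y : Fin d → unitInterval) i : ℝ) := by
    intro i
    apply exists_lt_of_lt_ciSup
    have h1 : ((sSup S) i : ℝ) = ⨆ f : S, ((f : Fin d → unitInterval) i : ℝ) := by
      rw [show (sSup S) i = ⨆ f : S, (f : Fin d → unitInterval) i from sSup_apply]
      exact Set.Icc.coe_iSup zero_le_one
    rw [← h1]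
    have : (0:ℝ) < ε / d := by positivity
    linarith
  choose y hy using key
  have hFin : Nonempty (Fin d) := ⟨⟨0, hd⟩⟩
  have hdir : Directed (· ≤ ·) (fun i : Fin d => (y i : Fin d → unitInterval)) := by
    intro i j
    rcases eq_or_ne (y i : Fin d → unitInterval) (y j : Fin d → unitInterval) with h | h
    · exact ⟨j, le_of_eq h, le_refl _⟩
    · rcases hch (y i).2 (y j).2 h with h' | h'
      · exact ⟨j, h', le_refl _⟩
      · exact ⟨i, le_refl _, h'⟩
  obtain ⟨z, hz⟩ := hdir.finset_le Finset.univ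
  refine ⟨y z, (y z).2, ?_⟩
  have h1 : ∑ i : Fin d, (((sSup S) i : ℝ) - ε / d)
      < ∑ i : Fin d, ((y i : Fin d → unitInterval) i : ℝ) :=
    Finset.sum_lt_sum_of_nonempty Finset.univ_nonempty (fun i _ => hy i)
  have h2 : ∑ i : Fin d, ((y i : Fin d → unitInterval) i : ℝ)
      ≤ ∑ i : Fin d, ((y z : Fin d → unitInterval) i : ℝ) :=
    Finset.sum_le_sum fun i _ => (hz i (Finset.mem_univ i)) i
  have h3 : ∑ i : Fin d, (((sSup S) i : ℝ) - ε / d) = gsum (sSup S) - ε := by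
    rw [Finset.sum_sub_distrib]
    simp [gsum, Finset.card_univ]
    field_simp
  have := h1.trans_le h2
  rw [h3] at this
  rw [show gsum ((y z : Fin d → unitInterval)) = ∑ i : Fin d, (((y z : Fin d → unitInterval)) i : ℝ) from rfl]
  linarith

lemma exists_near_sInf (hd : 1 ≤ d) {S : Set (Fin d → unitInterval)}
    (hS : S.Nonempty) (hch : IsChain (· ≤ ·) S) {ε : ℝ} (hε : 0 < ε) :
    ∃ y ∈ S, gsum y < gsum (sInf S) + ε := by
  have hne : Nonempty S := hS.to_subtype
  have hd0 : (0:ℝ) < d := by exact_mod_cast Nat.lt_of_lt_of_le Nat.zero_lt_one hd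
  have key : ∀ i : Fin d, ∃ y : S,
      ((y : Fin d → unitInterval) i : ℝ) < ((sInf S) i : ℝ) + ε / d := by
    intro i
    apply exists_lt_of_ciInf_lt
    have h1 : ((sInf S) i : ℝ) = ⨅ f : S, ((f : Fin d → unitInterval) i : ℝ) := by
      rw [show (sInf S) i = ⨅ f : S, (f : Fin d → unitInterval) i from sInf_apply]
      exact Set.Icc.coe_iInf zero_le_one
    rw [← h1]
    have : (0:ℝ) < ε / d := by positivity
    linarith
  choose y hy using key
  have hFin : Nonempty (Fin d) := ⟨⟨0, hd⟩⟩
  have hdir : Directed (· ≥ ·) (fun i : Fin d => (y i : Fin d → unitInterval)) := by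
    intro i j
    rcases eq_or_ne (y i : Fin d → unitInterval) (y j : Fin d → unitInterval) with h | h
    · exact ⟨j, le_of_eq h.symm, le_refl _⟩
    · rcases hch (y i).2 (y j).2 h with h' | h'
      · exact ⟨i, le_refl _, h'⟩
      · exact ⟨j, h', le_refl _⟩
  obtain ⟨z, hz⟩ := hdir.finset_le Finset.univ
  refine ⟨y z, (y z).2, ?_⟩
  have h1 : ∑ i : Fin d, ((y i : Fin d → unitInterval) i : ℝ)
      < ∑ i : Fin d, (((sInf S) i : ℝ) + ε / d) :=
    Finset.sum_lt_sum_of_nonempty Finset.univ_nonempty (fun i _ => hy i)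
  have h2 : ∑ i : Fin d, ((y z : Fin d → unitInterval) i : ℝ)
      ≤ ∑ i : Fin d, ((y i : Fin d → unitInterval) i : ℝ) :=
    Finset.sum_le_sum fun i _ => (hz i (Finset.mem_univ i)) i
  have h3 : ∑ i : Fin d, (((sInf S) i : ℝ) + ε / d) = gsum (sInf S) + ε := by
    rw [Finset.sum_add_distrib]
    simp [gsum, Finset.card_univ]
    field_simp
  have := h2.trans_lt h1
  rw [h3] at this
  rw [show gsum ((y z : Fin d → unitInterval)) = ∑ i : Fin d, (((y z : Fin d → unitInterval)) i : ℝ) from rfl]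
  linarith

end Aux

/-- Every maximal chain of `[0,1]^d` (for `d ≥ 1`) is order-isomorphic
to `[0,1]`. -/
theorem stmt_12 (d : ℕ) (hd : 1 ≤ d) (C : Set (Fin d → unitInterval))
    (hC : IsMaxChain (· ≤ ·) C) :
    Nonempty (C ≃o unitInterval) := by
  classical
  have hd0 : (0:ℝ) < d := by exact_mod_cast Nat.lt_of_lt_of_le Nat.zero_lt_one hd
  have hbot : (⊥ : Fin d → unitInterval) ∈ C := by
    have := sSup_mem_chain hC (Set.empty_subset C)
    rwa [sSup_empty] at this
  have htop : (⊤ : Fin d → unitInterval) ∈ C := by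
    have := sInf_mem_chain hC (Set.empty_subset C)
    rwa [sInf_empty] at this
  have hgbot : gsum (⊥ : Fin d → unitInterval) = 0 := by
    have h0 : ∀ i : Fin d, ((⊥ : Fin d → unitInterval) i : ℝ) = 0 := fun i => rfl
    calc gsum (⊥ : Fin d → unitInterval) = ∑ _i : Fin d, (0:ℝ) :=
          Finset.sum_congr rfl (fun i _ => h0 i)
    _ = 0 := by simp
  have hgtop : gsum (⊤ : Fin d → unitInterval) = d := by
    have h1 : ∀ i : Fin d, ((⊤ : Fin d → unitInterval) i : ℝ) = 1 := fun i => rfl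
    calc gsum (⊤ : Fin d → unitInterval) = ∑ _i : Fin d, (1:ℝ) :=
          Finset.sum_congr rfl (fun i _ => h1 i)
    _ = d := by simp
  -- surjectivity of gsum onto [0, d] along C
  have hsurj : ∀ t : unitInterval, ∃ x ∈ C, gsum x = (t : ℝ) * d := by
    intro t
    by_contra hno
    push_neg at hno
    set s : ℝ := (t : ℝ) * d with hsdef
    have hs0 : 0 ≤ s := mul_nonneg t.2.1 hd0.le
    have hsd : s ≤ d := by nlinarith [t.2.2, hd0]
    set L := {x ∈ C | gsum x < s} with hLdef
    set U := {x ∈ C | s < gsum x} with hUdef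
    have hLc : L ⊆ C := fun x hx => hx.1
    have hUc : U ⊆ C := fun x hx => hx.1
    have hmemLU : ∀ x ∈ C, x ∈ L ∨ x ∈ U := fun x hx =>
      (lt_or_gt_of_ne (hno x hx)).imp (fun h => ⟨hx, h⟩) (fun h => ⟨hx, h⟩)
    have hbotL : (⊥ : Fin d → unitInterval) ∈ L := by
      refine ⟨hbot, ?_⟩
      rw [hgbot]
      exact lt_of_le_of_ne hs0 (fun h => hno _ hbot (hgbot.trans h))
    have htopU : (⊤ : Fin d → unitInterval) ∈ U := by
      refine ⟨htop, ?_⟩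
      rw [hgtop]
      exact lt_of_le_of_ne hsd (fun h => hno _ htop (hgtop.trans h.symm))
    have hLU : ∀ x ∈ L, ∀ y ∈ U, x ≤ y := by
      intro x hx y hy
      rcases eq_or_ne x y with h | h
      · exact le_of_eq h
      · rcases hC.1 (hLc hx) (hUc hy) h with h' | h'
        · exact h'
        · exfalso
          have := gsum_mono h'
          have hx2 := hx.2; have hy2 := hy.2
          linarith
    set m := sSup L with hm
    set m' := sInf U with hm'
    have hmC : m ∈ C := sSup_mem_chain hC hLc
    have hm'C : m' ∈ C := sInf_mem_chain hC hUc
    have hgm : gsum m ≤ s := by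
      apply le_of_forall_pos_le_add
      intro ε hε
      obtain ⟨y, hyL, hylt⟩ := exists_near_sSup hd ⟨_, hbotL⟩ (hC.1.mono hLc) hε
      have := hyL.2
      linarith
    have hgm' : s ≤ gsum m' := by
      apply le_of_forall_pos_le_add
      intro ε hε
      obtain ⟨y, hyU, hylt⟩ := exists_near_sInf hd ⟨_, htopU⟩ (hC.1.mono hUc) hε
      have := hyU.2
      linarith
    have hmL : m ∈ L := ⟨hmC, lt_of_le_of_ne hgm (hno m hmC)⟩
    have hm'U : m' ∈ U := ⟨hm'C, lt_of_le_of_ne hgm' (fun h => hno m' hm'C h.symm)⟩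
    have hmm' : m < m' := by
      have hle : m ≤ m' := le_sInf fun y hy => sSup_le fun x hx => hLU x hx y hy
      refine lt_of_le_of_ne hle (fun h => ?_)
      have h1 := hmL.2
      have h2 := hm'U.2
      rw [h] at h1
      linarith
    refine no_gap hC hmC hm'C hmm' (fun y hy => ?_)
    rcases hmemLU y hy with h | h
    · exact Or.inl (le_sSup h)
    · exact Or.inr (sInf_le h)
  -- the order isomorphism
  have hnn : ∀ x : Fin d → unitInterval, 0 ≤ gsum x :=
    fun x => Finset.sum_nonneg fun i _ => (x i).2.1
  have hub : ∀ x : Fin d → unitInterval, gsum x ≤ d := by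
    intro x
    calc gsum x ≤ ∑ _i : Fin d, (1:ℝ) := Finset.sum_le_sum fun i _ => (x i).2.2
    _ = d := by simp
  let f : C → unitInterval := fun x => ⟨gsum x.1 / d, by
    constructor
    · exact div_nonneg (hnn x.1) hd0.le
    · rw [div_le_one hd0]; exact hub x.1⟩
  have hfval : ∀ x : C, (f x : ℝ) = gsum x.1 / d := fun x => rfl
  have hginj : ∀ x y : C, gsum x.1 ≤ gsum y.1 → x ≤ y := by
    intro x y hg
    rcases eq_or_ne x y with h | h
    · exact le_of_eq h
    · rcases hC.1 x.2 y.2 (fun hh => h (Subtype.ext hh)) with h' | h'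
      · exact h'
      · exfalso
        have := gsum_strict h' (fun hh => h (Subtype.ext hh.symm))
        linarith
  have hfbij : Function.Bijective f := by
    constructor
    · intro x y hxy
      have : gsum x.1 = gsum y.1 := by
        have := congrArg (fun z : unitInterval => (z : ℝ) * d) hxy
        simp only [hfval] at this
        field_simp at this
        exact this
      exact le_antisymm (hginj x y this.le) (hginj y x this.ge)
    · intro t
      obtain ⟨x, hxC, hgx⟩ := hsurj t
      refine ⟨⟨x, hxC⟩, ?_⟩
      apply Subtype.ext
      rw [hfval, hgx]
      field_simp
  exact ⟨{ toEquiv := Equiv.ofBijective f hfbij,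
           map_rel_iff' := by
             intro a b
             simp only [Equiv.ofBijective_apply]
             constructor
             · intro h
               apply hginj
               have : (f a : ℝ) ≤ (f b : ℝ) := h
               rw [hfval, hfval] at this
               exact (div_le_div_iff_of_pos_right hd0).mp this
             · intro h
               show (f a : ℝ) ≤ (f b : ℝ)
               rw [hfval, hfval]
               exact (div_le_div_iff_of_pos_right hd0).mpr (gsum_mono h) }⟩
end

section
/- For a join-continuous f : [0,1] → [0,1], the set C_f := ⋃_{x ∈ [0,1]} {x} × [f(x), f∧(x)], where f∧(x) = ⨅_{x<y} f(y), is a maximal chain of [0,1]². -/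
open unitInterval

lemma sSup_lt_set (x : unitInterval) : sSup {y | y < x} = x := by
  apply le_antisymm (sSup_le fun y hy => hy.le)
  by_contra h
  obtain ⟨z, hz1, hz2⟩ := exists_between (lt_of_not_ge h)
  exact absurd (le_sSup (show z ∈ {y | y < x} from hz2)) (not_le.mpr hz1)

/-- For a join-continuous `f`, the set
`C_f = ⋃_{x} {x} × [f(x), f∧(x)]` is a maximal chain of `[0,1]²`. -/
theorem stmt_13 (f : unitInterval → unitInterval) (hf : JoinCont f) :
    IsMaxChain (· ≤ ·)
      {p : unitInterval × unitInterval | f p.1 ≤ p.2 ∧ p.2 ≤ mOf f p.1} := by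
  have hmono := joinCont_mono hf
  have hfm : ∀ x, f x ≤ mOf f x := fun x =>
    le_sInf (by rintro a ⟨y, hy, rfl⟩; exact hmono hy.le)
  constructor
  · rintro ⟨x, a⟩ ⟨ha1, ha2⟩ ⟨y, b⟩ ⟨hb1, hb2⟩ hne
    rcases lt_trichotomy x y with h | h | h
    · exact Or.inl (Prod.mk_le_mk.mpr ⟨h.le, ha2.trans ((sInf_le (Set.mem_image_of_mem f h)).trans hb1)⟩)
    · subst h
      rcases le_total a b with hab | hab
      · exact Or.inl (Prod.mk_le_mk.mpr ⟨le_rfl, hab⟩)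
      · exact Or.inr (Prod.mk_le_mk.mpr ⟨le_rfl, hab⟩)
    · exact Or.inr (Prod.mk_le_mk.mpr ⟨h.le, hb2.trans ((sInf_le (Set.mem_image_of_mem f h)).trans ha1)⟩)
  · intro t ht hsub
    apply Set.Subset.antisymm hsub
    rintro ⟨x, b⟩ hp
    constructor
    · -- f x ≤ b
      by_contra hb
      have hb' : b < f x := lt_of_not_ge hb
      have hsup : f x = sSup (f '' {y | y < x}) := by
        conv_lhs => rw [← sSup_lt_set x]
        exact hf _
      have hex : ∃ y, y < x ∧ b < f y := by
        by_contra hno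
        push_neg at hno
        have : f x ≤ b := by
          rw [hsup]
          exact sSup_le (by rintro a ⟨y, hy, rfl⟩; exact hno y hy)
        exact hb this
      obtain ⟨y, hyx, hby⟩ := hex
      have hyt : ((y, f y) : unitInterval × unitInterval) ∈ t :=
        hsub ⟨le_rfl, hfm y⟩
      rcases eq_or_ne ((y, f y) : unitInterval × unitInterval) (x, b) with heq | hne
      · exact absurd (congrArg Prod.fst heq) (ne_of_lt hyx)
      · rcases ht hyt hp hne with hle | hle
        · exact absurd hle.2 (not_le.mpr hby)
        · exact absurd hle.1 (not_le.mpr hyx)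
    · -- b ≤ mOf f x
      by_contra hb
      have hb' : mOf f x < b := lt_of_not_ge hb
      have hex : ∃ y, x < y ∧ f y < b := by
        by_contra hno
        push_neg at hno
        have : b ≤ mOf f x :=
          le_sInf (by rintro a ⟨y, hy, rfl⟩; exact hno y hy)
        exact hb this
      obtain ⟨y, hxy, hby⟩ := hex
      have hyt : ((y, f y) : unitInterval × unitInterval) ∈ t :=
        hsub ⟨le_rfl, hfm y⟩
      rcases eq_or_ne ((y, f y) : unitInterval × unitInterval) (x, b) with heq | hne
      · exact absurd (congrArg Prod.fst heq) (ne_of_gt hxy)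
      · rcases ht hyt hp hne with hle | hle
        · exact absurd hle.1 (not_le.mpr hxy)
        · exact absurd hle.2 (not_le.mpr hby)
end

section
/- The join-prime elements of the complete distributive lattice of join-continuous functions [0,1] → [0,1] are exactly the functions e_{x,y} with x < 1 and y > 0 (i.e., the nonzero one-step functions). -/
/-!
A join-continuous `f` is monotone with `f 0 = 0`. If `f` is join-prime, let `x` be the largest
zero of `f` (it exists by join-continuity) and `t > x`. Then `f ≤ e_{0, f t} ⊔ e_{t, 1}` and
`f ≰ e_{t, 1}` because `f t ≠ 0`, so `f ≤ e_{0, f t}`, which gives `f 1 ≤ f t`. Hence `f` is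
constant equal to `f 1` on `(x, 1]`, i.e. `f = e_{x, f 1}`.
-/

open unitInterval

/-- The one-step function `e_{x,y}`: value `0` on `[0,x]` and `y` on `(x,1]`. -/
noncomputable def estep (x y : unitInterval) (t : unitInterval) : unitInterval :=
  if t ≤ x then 0 else y

theorem estep_of_le {x y t : unitInterval} (h : t ≤ x) : estep x y t = 0 := if_pos h

theorem estep_of_lt {x y t : unitInterval} (h : x < t) : estep x y t = y := if_neg h.not_ge

theorem estep_le (x y t : unitInterval) : estep x y t ≤ y := by
  unfold estep
  split_ifs
  exacts [nonneg', le_rfl]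

theorem estep_joinCont (x y : unitInterval) : JoinCont (estep x y) := by
  intro X
  rcases le_or_gt (sSup X) x with h | h
  · rw [estep_of_le h]
    refine (sSup_eq_bot.2 ?_).symm
    rintro _ ⟨t, ht, rfl⟩
    exact estep_of_le ((le_sSup ht).trans h)
  · obtain ⟨t, ht, hxt⟩ := lt_sSup_iff.1 h
    rw [estep_of_lt h]
    refine le_antisymm (le_sSup ⟨t, ht, estep_of_lt hxt⟩) (sSup_le ?_)
    rintro _ ⟨s, -, rfl⟩
    exact estep_le x y s

theorem estep_le_iff {x y : unitInterval} {g : unitInterval → unitInterval} :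
    estep x y ≤ g ↔ ∀ t, x < t → y ≤ g t := by
  refine ⟨fun h t hxt => (estep_of_lt hxt).ge.trans (h t), fun h t => ?_⟩
  rcases le_or_gt t x with htx | hxt
  · exact estep_of_le htx ▸ nonneg'
  · exact estep_of_lt hxt ▸ h t hxt

theorem estep_ne_zero {x y : unitInterval} (hx : x < 1) (hy : 0 < y) :
    estep x y ≠ fun _ => 0 := fun h => hy.ne' ((estep_of_lt hx).symm.trans (congrFun h 1))

theorem estep_le_sup {x y : unitInterval} {a b : unitInterval → unitInterval}
    (ha : Monotone a) (hb : Monotone b) (hab : estep x y ≤ a ⊔ b) :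
    estep x y ≤ a ∨ estep x y ≤ b := by
  -- otherwise `a` and `b` both drop below `y` somewhere on `(x, 1]`, hence both at the minimum
  simp only [estep_le_iff] at hab ⊢
  by_contra! h
  obtain ⟨⟨s, hxs, has⟩, ⟨t, hxt, hbt⟩⟩ := h
  have := hab (min s t) (lt_min hxs hxt)
  rw [Pi.sup_apply, le_sup_iff] at this
  rcases this with h | h
  · exact has.not_ge (h.trans (ha (min_le_left s t)))
  · exact hbt.not_ge (h.trans (hb (min_le_right s t)))

namespace JoinCont

variable {f : unitInterval → unitInterval}

theorem monotone (hf : JoinCont f) : Monotone f := by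
  intro u v huv
  have h := hf {u, v}
  rw [Set.image_pair, sSup_pair, sSup_pair, sup_eq_right.2 huv] at h
  exact h ▸ le_sup_left

theorem map_zero (hf : JoinCont f) : f 0 = 0 := by
  have h := hf ∅
  rwa [Set.image_empty, sSup_empty] at h

theorem map_sSup_setOf_eq_zero (hf : JoinCont f) : f (sSup {t | f t = 0}) = 0 := by
  rw [hf]
  refine sSup_eq_bot.2 ?_
  rintro _ ⟨t, ht, rfl⟩
  exact ht

theorem le_estep_sup_estep (hf : JoinCont f) (t : unitInterval) :
    f ≤ estep 0 (f t) ⊔ estep t 1 := by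
  intro s
  rw [Pi.sup_apply, le_sup_iff]
  rcases le_or_gt s t with hst | hts
  · left
    rcases eq_or_lt_of_le (nonneg' : 0 ≤ s) with hs | hs
    · rw [← hs, hf.map_zero]
      exact nonneg'
    · exact (hf.monotone hst).trans (estep_of_lt hs).ge
  · exact .inr (le_one'.trans (estep_of_lt hts).ge)

theorem map_one_le_of_prime (hf : JoinCont f)
    (hprime : ∀ a b : unitInterval → unitInterval, JoinCont a → JoinCont b →
      f ≤ a ⊔ b → f ≤ a ∨ f ≤ b)
    {t : unitInterval} (ht : f t ≠ 0) : f 1 ≤ f t := by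
  rcases hprime _ _ (estep_joinCont _ _) (estep_joinCont _ _) (hf.le_estep_sup_estep t) with h | h
  · exact (h 1).trans (estep_of_lt zero_lt_one).le
  · exact absurd (le_antisymm ((h t).trans_eq (estep_of_le le_rfl)) nonneg') ht

theorem exists_eq_estep_of_prime (hf : JoinCont f) (hne : f ≠ fun _ => 0)
    (hprime : ∀ a b : unitInterval → unitInterval, JoinCont a → JoinCont b →
      f ≤ a ⊔ b → f ≤ a ∨ f ≤ b) :
    ∃ x y : unitInterval, x < 1 ∧ 0 < y ∧ f = estep x y := by
  have h1 : f 1 ≠ 0 := fun h1 => hne <| funext fun t =>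
    le_antisymm ((hf.monotone le_one').trans_eq h1) nonneg'
  set x := sSup {t | f t = 0}
  have hx : f x = 0 := hf.map_sSup_setOf_eq_zero
  refine ⟨x, f 1, lt_of_le_of_ne le_one' (fun h => h1 (h ▸ hx)), pos_iff_ne_zero.2 h1, ?_⟩
  funext t
  rcases le_or_gt t x with htx | hxt
  · rw [estep_of_le htx]
    exact le_antisymm ((hf.monotone htx).trans_eq hx) nonneg'
  · have ht : f t ≠ 0 := fun ht => hxt.not_ge (le_sSup ht)
    rw [estep_of_lt hxt]
    exact le_antisymm (hf.monotone le_one') (hf.map_one_le_of_prime hprime ht)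

end JoinCont

/-- The join-prime elements of the lattice of join-continuous self-maps of
`[0,1]` are exactly the one-step functions `e_{x,y}` with `x < 1` and
`0 < y`. -/
theorem stmt_17 (f : unitInterval → unitInterval) (hf : JoinCont f) :
    (f ≠ (fun _ => 0) ∧
      ∀ a b : unitInterval → unitInterval, JoinCont a → JoinCont b →
        f ≤ a ⊔ b → f ≤ a ∨ f ≤ b) ↔
    ∃ x y : unitInterval, x < 1 ∧ 0 < y ∧ f = estep x y := by
  constructor
  · rintro ⟨hne, hprime⟩
    exact hf.exists_eq_estep_of_prime hne hprime
  · rintro ⟨x, y, hx, hy, rfl⟩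
    exact ⟨estep_ne_zero hx hy, fun a b ha hb => estep_le_sup ha.monotone hb.monotone⟩
end
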